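/- arXiv:math/0702536 — 5 statements merged into one kernel-verified Lean document; each statement's English description precedes it below -/
import Mathlib

section
/- For integers a₁, ..., aₙ and m, the product gcd(a₁, ..., aₙ, m) · m^(n-1) is divisible by the product gcd(a₁, m) · gcd(a₂, m) · ... · gcd(aₙ, m). -/
lemma keyN (a b m : ℕ) :
    Nat.gcd a m * Nat.gcd b m ∣ Nat.gcd (Nat.gcd a b) m * m := by
  have h : Nat.gcd (Nat.gcd a b) m * m = Nat.gcd (Nat.gcd (a * m) (b * m)) (m * m) := by
    rw [Nat.gcd_mul_right, Nat.gcd_mul_right]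
  rw [h]
  have hbm : Nat.gcd a m * Nat.gcd b m ∣ b * m := by
    have := mul_dvd_mul (Nat.gcd_dvd_right a m) (Nat.gcd_dvd_left b m)
    rwa [mul_comm m b] at this
  exact Nat.dvd_gcd (Nat.dvd_gcd
      (mul_dvd_mul (Nat.gcd_dvd_left a m) (Nat.gcd_dvd_right b m)) hbm)
    (mul_dvd_mul (Nat.gcd_dvd_right a m) (Nat.gcd_dvd_right b m))

lemma keyZ (x y m : ℤ) :
    (Int.gcd x m : ℤ) * (Int.gcd y m : ℤ) ∣ (Int.gcd (gcd x y) m : ℤ) * m := by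
  have hg : Int.gcd (gcd x y) m = Nat.gcd (Nat.gcd x.natAbs y.natAbs) m.natAbs := by
    show Nat.gcd (gcd x y).natAbs m.natAbs = _
    rw [Int.natAbs_gcd]
    rfl
  have hx : Int.gcd x m = Nat.gcd x.natAbs m.natAbs := rfl
  have hy : Int.gcd y m = Nat.gcd y.natAbs m.natAbs := rfl
  rw [← Int.dvd_natAbs, Int.natAbs_mul, Int.natAbs_natCast, hg, hx, hy]
  exact_mod_cast keyN x.natAbs y.natAbs m.natAbs

lemma keyS {ι : Type*} (s : Finset ι) (hs : s.Nonempty) (a : ι → ℤ) (m : ℤ) :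
    (∏ i ∈ s, (Int.gcd (a i) m : ℤ)) ∣
      (Int.gcd (s.gcd a) m : ℤ) * m ^ (s.card - 1) := by
  classical
  induction hs using Finset.Nonempty.cons_induction with
  | singleton i =>
      simp only [Finset.prod_singleton, Finset.gcd_singleton, Finset.card_singleton]
      have : Int.gcd (normalize (a i)) m = Int.gcd (a i) m := by
        show Nat.gcd (normalize (a i)).natAbs _ = _
        rw [← Int.abs_eq_normalize, Int.natAbs_abs]
        rfl
      rw [this]
      simp
  | cons i s hi hs ih =>
      rw [Finset.prod_cons, Finset.cons_eq_insert, Finset.gcd_insert,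
        Finset.card_insert_of_notMem hi]
      have h1 : (Int.gcd (a i) m : ℤ) * (∏ j ∈ s, (Int.gcd (a j) m : ℤ)) ∣
          (Int.gcd (a i) m : ℤ) * ((Int.gcd (s.gcd a) m : ℤ) * m ^ (s.card - 1)) :=
        mul_dvd_mul_left _ ih
      have h2 : (Int.gcd (a i) m : ℤ) * ((Int.gcd (s.gcd a) m : ℤ) * m ^ (s.card - 1)) ∣
          (Int.gcd (gcd (a i) (s.gcd a)) m : ℤ) * m * m ^ (s.card - 1) := by
        rw [← mul_assoc]
        exact mul_dvd_mul_right (keyZ (a i) (s.gcd a) m) _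
      refine h1.trans (h2.trans (dvd_of_eq ?_))
      rw [mul_assoc, ← pow_succ']
      congr 2
      cases' hs with j hj
      have : 1 ≤ s.card := Finset.card_pos.mpr ⟨j, hj⟩
      omega

theorem stmt_0 (n : ℕ) (hn : 1 ≤ n) (a : Fin n → ℤ) (m : ℤ) :
    (∏ i, (Int.gcd (a i) m : ℤ)) ∣
      (Int.gcd (Finset.univ.gcd a) m : ℤ) * m ^ (n - 1) := by
  have := keyS Finset.univ (Finset.univ_nonempty_iff.mpr ⟨⟨0, hn⟩⟩) a m
  simpa using this
end

section
/- For integers a, b, m, the product gcd(a, b, m) · m is divisible by gcd(a, m) · gcd(b, m). -/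
/-! `a * m`, `b * m` and `m * m` are all divisible by `gcd a m * gcd b m`, hence so is
`gcd (gcd (a * m) (b * m)) (m * m)`, which is associated to `gcd (gcd a b) m * m`. -/

theorem gcd_mul_gcd_dvd_gcd_gcd_mul {α : Type*} [CommMonoidWithZero α] [GCDMonoid α]
    (a b m : α) : gcd a m * gcd b m ∣ gcd (gcd a b) m * m := by
  have hdvd : gcd a m * gcd b m ∣ gcd (gcd (a * m) (b * m)) (m * m) :=
    dvd_gcd
      (dvd_gcd (mul_dvd_mul (gcd_dvd_left a m) (gcd_dvd_right b m))
        (mul_comm m b ▸ mul_dvd_mul (gcd_dvd_right a m) (gcd_dvd_left b m)))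
      (mul_dvd_mul (gcd_dvd_right a m) (gcd_dvd_right b m))
  have hassoc : Associated (gcd (gcd (a * m) (b * m)) (m * m)) (gcd (gcd a b) m * m) :=
    ((gcd_mul_right' m a b).gcd (Associated.refl _)).trans (gcd_mul_right' m (gcd a b) m)
  exact hassoc.dvd_iff_dvd_right.mp hdvd

theorem stmt_1 (a b m : ℤ) :
    ((Int.gcd a m : ℤ) * (Int.gcd b m : ℤ)) ∣ (Int.gcd (Int.gcd a b) m : ℤ) * m := by
  simpa only [Int.coe_gcd] using gcd_mul_gcd_dvd_gcd_gcd_mul a b m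
end

section
/- If (x₁⁰, ..., xₙ⁰) is a solution of the linear congruence a₁x₁ + ... + aₙxₙ ≡ b (mod m) with m ≠ 0, then the tuples (xᵢ⁰ + (m / gcd(aᵢ, m)) · tᵢ)ᵢ, as (t₁, ..., tₙ) ranges over ∏ᵢ {0, 1, ..., gcd(aᵢ, m) - 1}, give ∏ᵢ gcd(aᵢ, m) pairwise distinct solutions modulo m. -/
/-!
Since `gcd(aᵢ, m)` divides `aᵢ`, the product `aᵢ · (m / gcd(aᵢ, m))` is a multiple of `m`,
so shifting `xᵢ` by multiples of `m / gcd(aᵢ, m)` does not change the residue of `∑ aᵢ xᵢ`.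
Conversely, with `m = g · d`, the congruence `d t ≡ d s (mod g d)` cancels to `t ≡ s (mod g)`,
which forces `t = s` when `0 ≤ t, s < g`.
-/

namespace Int

theorem dvd_mul_ediv_gcd (a m : ℤ) : m ∣ a * (m / a.gcd m) := by
  rw [← Int.mul_ediv_assoc a (Int.gcd_dvd_right a m), Int.mul_comm,
    Int.mul_ediv_assoc m (Int.gcd_dvd_left a m)]
  exact dvd_mul_right m _

theorem mul_add_ediv_gcd_mul_modEq (a m x t : ℤ) :
    a * (x + m / a.gcd m * t) ≡ a * x [ZMOD m] := by
  have hshift : a * (m / a.gcd m) * t ≡ 0 [ZMOD m] :=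
    modEq_zero_iff_dvd.2 ((dvd_mul_ediv_gcd a m).mul_right t)
  calc a * (x + m / a.gcd m * t) = a * x + a * (m / a.gcd m) * t := by ring
    _ ≡ a * x + 0 [ZMOD m] := hshift.add_left _
    _ = a * x := add_zero _

theorem eq_of_ediv_mul_modEq {m : ℤ} (hm : m ≠ 0) {g t s : ℕ} (hg : (g : ℤ) ∣ m)
    (ht : t < g) (hs : s < g) (h : m / g * t ≡ m / g * s [ZMOD m]) : t = s := by
  obtain ⟨d, rfl⟩ := hg
  have hd : d ≠ 0 := right_ne_zero_of_mul hm
  rw [Int.mul_ediv_cancel_left d (left_ne_zero_of_mul hm), Int.mul_comm (g : ℤ) d] at h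
  exact Nat.ModEq.eq_of_lt_of_lt (natCast_modEq_iff.1 (ModEq.mul_left_cancel' hd h)) ht hs

end Int

theorem stmt_5 (n : ℕ) (a : Fin n → ℤ) (b m : ℤ) (hm : m ≠ 0)
    (x0 : Fin n → ℤ) (hx0 : (∑ i, a i * x0 i) ≡ b [ZMOD m]) :
    (∀ t : Fin n → ℕ, (∀ i, t i < Int.gcd (a i) m) →
      (∑ i, a i * (x0 i + (m / Int.gcd (a i) m) * (t i : ℤ))) ≡ b [ZMOD m]) ∧
    (∀ t s : Fin n → ℕ, (∀ i, t i < Int.gcd (a i) m) → (∀ i, s i < Int.gcd (a i) m) →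
      (∀ i, x0 i + (m / Int.gcd (a i) m) * (t i : ℤ) ≡
            x0 i + (m / Int.gcd (a i) m) * (s i : ℤ) [ZMOD m]) → t = s) := by
  refine ⟨fun t _ => ?_, fun t s ht hs h => funext fun i => ?_⟩
  · exact (Int.ModEq.sum fun i _ => Int.mul_add_ediv_gcd_mul_modEq (a i) m (x0 i) (t i)).trans hx0
  · exact Int.eq_of_ediv_mul_modEq hm (Int.gcd_dvd_right _ _) (ht i) (hs i)
      (Int.ModEq.add_left_cancel' _ (h i))
end

section
/- Let m ≠ 0 and a₁, ..., aₙ, b be integers with gcd(a₁, ..., aₙ, m) dividing b. Let P₁ = |gcd(a₁, ..., aₙ, m)| · |m|^(n-1) and P₂ = ∏ᵢ |gcd(aᵢ, m)|. Then P₂ divides P₁, i.e., P₁ / P₂ is a positive integer. -/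
/-!
Adjoining a factor `d` (a divisor of `|m|`) to a running gcd `g` (also a divisor of `|m|`) gives
`d * g = gcd d g * lcm d g`, and `lcm d g ∣ |m|`; so every factor beyond the first costs at most
one power of `|m|` over the gcd.
-/

-- The extra factor `M` makes the empty case true and avoids the truncated `s.card - 1`.
theorem prod_mul_dvd_gcd_mul_pow {ι : Type*} [DecidableEq ι] (s : Finset ι) (d : ι → ℕ) {M : ℕ}
    (h : ∀ i ∈ s, d i ∣ M) :
    (∏ i ∈ s, d i) * M ∣ Nat.gcd (s.gcd d) M * M ^ s.card := by
  induction s using Finset.induction_on with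
  | empty => simp
  | insert i s hi ih =>
    rw [Finset.prod_insert hi, Finset.gcd_insert, Finset.card_insert_of_notMem hi]
    have ih := ih fun j hj => h j (Finset.mem_insert_of_mem hj)
    set g := Nat.gcd (s.gcd d) M
    have hlcm : Nat.lcm (d i) g ∣ M :=
      Nat.lcm_dvd (h i (Finset.mem_insert_self i s)) (Nat.gcd_dvd_right _ _)
    calc d i * (∏ j ∈ s, d j) * M ∣ d i * (g * M ^ s.card) := by
          rw [mul_assoc]; exact mul_dvd_mul_left _ ih
      _ = Nat.gcd (d i) g * Nat.lcm (d i) g * M ^ s.card := by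
          rw [Nat.gcd_mul_lcm, mul_assoc]
      _ ∣ Nat.gcd (d i) g * M * M ^ s.card :=
          mul_dvd_mul_right (mul_dvd_mul_left _ hlcm) _
      _ = Nat.gcd (Nat.gcd (d i) (s.gcd d)) M * M ^ (s.card + 1) := by
          rw [Nat.gcd_assoc, pow_succ']; ring

theorem Int.gcd_finset_gcd_eq {ι : Type*} (s : Finset ι) (a : ι → ℤ) (m : ℤ) :
    Int.gcd (s.gcd a) m = Nat.gcd (s.gcd fun i => Int.gcd (a i) m) m.natAbs := by
  refine eq_of_forall_dvd' fun k => ?_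
  simp only [Int.dvd_gcd_iff, Nat.dvd_gcd_iff, Finset.dvd_gcd_iff, Int.natCast_dvd]
  exact ⟨fun ⟨ha, hm⟩ => ⟨fun i hi => ⟨ha i hi, hm⟩, hm⟩, fun ⟨ha, hm⟩ => ⟨fun i hi => (ha i hi).1, hm⟩⟩

theorem stmt_12_general (n : ℕ) (a : Fin n → ℤ) (m : ℤ) (hm : m ≠ 0) :
    (∏ i, Int.gcd (a i) m) ∣ Int.gcd (Finset.univ.gcd a) m * m.natAbs ^ (n - 1) ∧
    0 < (Int.gcd (Finset.univ.gcd a) m * m.natAbs ^ (n - 1)) / ∏ i, Int.gcd (a i) m := by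
  have hM : 0 < m.natAbs := Int.natAbs_pos.mpr hm
  have key := prod_mul_dvd_gcd_mul_pow Finset.univ (fun i => Int.gcd (a i) m)
    fun i _ => Int.gcd_dvd_natAbs_right (a i) m
  rw [← Int.gcd_finset_gcd_eq, Finset.card_univ, Fintype.card_fin] at key
  have hpow : m.natAbs ^ n ∣ m.natAbs * m.natAbs ^ (n - 1) := by
    rw [← pow_succ']; exact pow_dvd_pow _ (by omega)
  have hdvd : (∏ i, Int.gcd (a i) m) ∣ Int.gcd (Finset.univ.gcd a) m * m.natAbs ^ (n - 1) := by
    refine Nat.dvd_of_mul_dvd_mul_right hM (key.trans ?_)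
    rw [mul_comm _ m.natAbs, mul_left_comm]
    exact mul_dvd_mul_left _ hpow
  have hP₁ : 0 < Int.gcd (Finset.univ.gcd a) m * m.natAbs ^ (n - 1) :=
    Nat.mul_pos (Int.gcd_pos_of_ne_zero_right _ hm) (Nat.pow_pos hM)
  have hP₂ : 0 < ∏ i, Int.gcd (a i) m :=
    Finset.prod_pos fun i _ => Int.gcd_pos_of_ne_zero_right _ hm
  exact ⟨hdvd, Nat.div_pos (Nat.le_of_dvd hP₁ hdvd) hP₂⟩

theorem stmt_12 (n : ℕ) (hn : 1 ≤ n) (a : Fin n → ℤ) (b m : ℤ) (hm : m ≠ 0)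
    (hd : (Int.gcd (Finset.univ.gcd a) m : ℤ) ∣ b) :
    (∏ i, Int.gcd (a i) m) ∣ Int.gcd (Finset.univ.gcd a) m * m.natAbs ^ (n - 1) ∧
    0 < (Int.gcd (Finset.univ.gcd a) m * m.natAbs ^ (n - 1)) / ∏ i, Int.gcd (a i) m :=
  stmt_12_general n a m hm
end

section
/- Let m ≠ 0 and suppose gcd(a₁, ..., aₙ, m) divides b. The solution set S ⊆ (ℤ/mℤ)ⁿ of a₁x₁ + ... + aₙxₙ ≡ b (mod m) is a disjoint union of exactly P₁/P₂ orbits under translation by the subgroup A generated by the images of Vᵢ = (0,...,0, m/gcd(aᵢ,m), 0,...,0), where P₁ = |gcd(a₁,...,aₙ,m)|·|m|^(n-1) and P₂ = ∏ᵢ |gcd(aᵢ, m)|; each orbit has exactly P₂ elements. -/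
/-!
The solution set is the fibre over `b` of the linear form `f x = ∑ aᵢ xᵢ` on `(ℤ/m)ⁿ`. The range
of `f` is the ideal generated by `g = gcd(a₁, …, aₙ)`, a cyclic group of order `|m| / gcd(g, m)`;
since `gcd(g, m) ∣ b` the fibre is nonempty, so it has as many elements as `ker f`, namely
`gcd(g, m) |m|ⁿ⁻¹`. The group `A` is the product of the cyclic groups generated by
`m / gcd(aᵢ, m)`, of orders `gcd(aᵢ, m)`, and it lies in `ker f` because `aᵢ · m / gcd(aᵢ, m)` is a
multiple of `m`. Hence the solution set is a union of `A`-cosets, each with `∏ gcd(aᵢ, m)` elements.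
-/

open Finset

namespace AddSubgroup

variable {ι : Type*} {G : ι → Type*} [∀ i, AddGroup (G i)]

theorem card_pi_univ [Fintype ι] (H : ∀ i, AddSubgroup (G i)) :
    Nat.card (pi Set.univ H) = ∏ i, Nat.card (H i) := by
  rw [← Nat.card_pi]
  exact Nat.card_congr
    ((Equiv.subtypeEquivRight fun x => by simp [mem_pi]).trans (Equiv.subtypePiEquivPi))

theorem closure_range_single_eq_pi [Finite ι] [DecidableEq ι] (v : ∀ i, G i) :
    closure (Set.range fun i => Pi.single i (v i)) = pi Set.univ fun i => zmultiples (v i) := by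
  refine le_antisymm ((closure_le _).2 ?_) (pi_le_iff.2 fun i => ?_)
  · rintro _ ⟨i, rfl⟩
    exact (single_mem_pi i (v i)).2 fun _ => mem_zmultiples (v i)
  · rw [AddMonoidHom.map_zmultiples]
    exact zmultiples_le_of_mem (subset_closure ⟨i, rfl⟩)

end AddSubgroup

theorem QuotientAddGroup.card_preimage_mk {G : Type*} [AddGroup G] (A : AddSubgroup G)
    (t : Set (G ⧸ A)) : Nat.card (mk ⁻¹' t : Set G) = Nat.card A * Nat.card t := by
  rw [Nat.card_congr (preimageMkEquivAddSubgroupProdSet A t), Nat.card_prod]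

theorem AddMonoidHom.preimage_image_mk_preimage {G H : Type*} [AddGroup G] [AddGroup H]
    (f : G →+ H) {A : AddSubgroup G} (hA : A ≤ f.ker) (T : Set H) :
    QuotientAddGroup.mk ⁻¹' (QuotientAddGroup.mk '' (f ⁻¹' T) : Set (G ⧸ A)) = f ⁻¹' T := by
  refine Set.Subset.antisymm ?_ (Set.subset_preimage_image _ _)
  rintro x ⟨y, hy, hyx⟩
  have hxy : f (-y + x) = 0 := hA (QuotientAddGroup.eq.mp hyx)
  rw [map_add, map_neg, neg_add_eq_zero] at hxy
  rwa [Set.mem_preimage, ← hxy]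

theorem LinearMap.card_ker_mul_card_range {R M M₂ : Type*} [Ring R] [AddCommGroup M]
    [AddCommGroup M₂] [Module R M] [Module R M₂] (f : M →ₗ[R] M₂) :
    Nat.card (ker f) * Nat.card (range f) = Nat.card M := by
  have := f.toAddMonoidHom.ker.card_mul_index
  rw [AddSubgroup.index_ker] at this
  exact this

theorem LinearMap.card_fiber_eq_card_ker {R M M₂ : Type*} [Ring R] [AddCommGroup M]
    [AddCommGroup M₂] [Module R M] [Module R M₂] (f : M →ₗ[R] M₂) {y : M₂}
    (hy : y ∈ range f) : Nat.card (f ⁻¹' {y}) = Nat.card (ker f) := by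
  obtain ⟨x, rfl⟩ := hy
  exact Nat.card_congr (f.toAddMonoidHom.fiberEquivKer x)

namespace ZMod

theorem addOrderOf_intCast {n : ℕ} (hn : n ≠ 0) (x : ℤ) :
    addOrderOf (x : ZMod n) = n / n.gcd x.natAbs := by
  rcases Int.natAbs_eq x with h | h <;> rw [h]
  · rw [Int.cast_natCast, Int.natAbs_natCast, addOrderOf_coe _ hn]
  · rw [Int.cast_neg, Int.cast_natCast, addOrderOf_neg, Int.natAbs_neg, Int.natAbs_natCast,
      addOrderOf_coe _ hn]

theorem addOrderOf_intCast_ediv {m k : ℤ} (hm : m ≠ 0) (hk : k ∣ m) :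
    addOrderOf ((m / k : ℤ) : ZMod m.natAbs) = k.natAbs := by
  have hM : m.natAbs ≠ 0 := Int.natAbs_ne_zero.2 hm
  have hk' : k.natAbs ∣ m.natAbs := Int.natAbs_dvd_natAbs.2 hk
  rw [addOrderOf_intCast hM, Int.natAbs_ediv_of_dvd hk,
    Nat.gcd_eq_right (Nat.div_dvd_of_dvd hk'), Nat.div_div_self hk' hM]

theorem card_span_singleton {n : ℕ} (x : ZMod n) : Nat.card (Ideal.span {x}) = addOrderOf x := by
  have hspan : (Ideal.span {x}).toAddSubgroup = AddSubgroup.zmultiples x := by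
    ext y
    simp only [Submodule.mem_toAddSubgroup, Ideal.mem_span_singleton',
      AddSubgroup.mem_zmultiples_iff, zsmul_eq_mul]
    constructor
    · rintro ⟨c, rfl⟩
      obtain ⟨k, rfl⟩ := intCast_surjective c
      exact ⟨k, rfl⟩
    · rintro ⟨k, rfl⟩
      exact ⟨k, rfl⟩
  rw [← Nat.card_zmultiples, ← hspan]
  rfl

theorem intCast_mul_intCast_ediv_gcd (a m : ℤ) :
    (a : ZMod m.natAbs) * ((m / Int.gcd a m : ℤ) : ZMod m.natAbs) = 0 := by
  set g : ℤ := (Int.gcd a m : ℤ)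
  obtain ⟨k, hk⟩ : g ∣ a := Int.gcd_dvd_left a m
  have hak : a * (m / g) = k * m := by
    rw [hk, mul_comm g k, mul_assoc, Int.mul_ediv_cancel' (Int.gcd_dvd_right a m)]
  rw [← Int.cast_mul, hak, intCast_zmod_eq_zero_iff_dvd, Int.natAbs_dvd]
  exact dvd_mul_left m k

end ZMod

theorem Ideal.span_range_intCast_eq_span_gcd {R ι : Type*} [CommRing R] [Fintype ι]
    (a : ι → ℤ) :
    Ideal.span (Set.range fun i => (a i : R)) = Ideal.span {((univ.gcd a : ℤ) : R)} := by
  apply le_antisymm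
  · rw [Ideal.span_le]
    rintro _ ⟨i, rfl⟩
    obtain ⟨c, hc⟩ := Finset.gcd_dvd (f := a) (mem_univ i)
    exact Ideal.mem_span_singleton.2 ⟨c, by rw [← Int.cast_mul, ← hc]⟩
  · rw [Ideal.span_singleton_le_iff_mem]
    obtain ⟨u, hu⟩ := univ.gcd_eq_sum_mul a
    rw [hu]
    push_cast
    exact Ideal.sum_mem _ fun i _ => Ideal.mul_mem_right _ _ (Ideal.subset_span ⟨i, rfl⟩)

theorem range_dotProductBilin {R ι : Type*} [CommSemiring R] [Fintype ι] (c : ι → R) :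
    LinearMap.range (dotProductBilin R R c) = Ideal.span (Set.range c) := by
  classical
  apply le_antisymm
  · rintro _ ⟨x, rfl⟩
    exact Ideal.sum_mem _ fun i _ => Ideal.mul_mem_right _ _ (Ideal.subset_span ⟨i, rfl⟩)
  · rw [Ideal.span_le]
    rintro _ ⟨i, rfl⟩
    exact ⟨Pi.single i 1, by simp [dotProduct_single]⟩

section LinearCongruence

variable {ι : Type*} [Fintype ι] {m : ℤ}

def congruenceForm (m : ℤ) (a : ι → ℤ) : (ι → ZMod m.natAbs) →ₗ[ZMod m.natAbs] ZMod m.natAbs :=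
  dotProductBilin (ZMod m.natAbs) (ZMod m.natAbs) fun i => (a i : ZMod m.natAbs)

theorem congruenceForm_single_ediv_gcd [DecidableEq ι] (a : ι → ℤ) (i : ι) :
    congruenceForm m a (Pi.single i ((m / Int.gcd (a i) m : ℤ) : ZMod m.natAbs)) = 0 := by
  rw [congruenceForm, dotProductBilin_apply_apply, dotProduct_single,
    ZMod.intCast_mul_intCast_ediv_gcd]

theorem range_congruenceForm (a : ι → ℤ) :
    LinearMap.range (congruenceForm m a) = Ideal.span {((univ.gcd a : ℤ) : ZMod m.natAbs)} := by
  rw [congruenceForm, range_dotProductBilin, Ideal.span_range_intCast_eq_span_gcd]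

theorem intCast_mem_range_congruenceForm (a : ι → ℤ) {b : ℤ}
    (hb : (Int.gcd (univ.gcd a) m : ℤ) ∣ b) :
    (b : ZMod m.natAbs) ∈ LinearMap.range (congruenceForm m a) := by
  rw [range_congruenceForm, Ideal.mem_span_singleton]
  have hm0 : ((m : ℤ) : ZMod m.natAbs) = 0 :=
    (ZMod.intCast_zmod_eq_zero_iff_dvd _ _).2 (Int.natAbs_dvd.2 dvd_rfl)
  refine dvd_trans ⟨Int.gcdA (univ.gcd a) m, ?_⟩ (map_dvd (Int.castRingHom _) hb)
  rw [eq_intCast, Int.gcd_eq_gcd_ab, Int.cast_add, Int.cast_mul, Int.cast_mul, hm0, zero_mul,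
    add_zero]

theorem card_range_congruenceForm (hm : m ≠ 0) (a : ι → ℤ) :
    Nat.card (LinearMap.range (congruenceForm m a)) = m.natAbs / Int.gcd (univ.gcd a) m := by
  rw [range_congruenceForm, ZMod.card_span_singleton,
    ZMod.addOrderOf_intCast (Int.natAbs_ne_zero.2 hm), Nat.gcd_comm]
  rfl

theorem card_ker_congruenceForm [Nonempty ι] (hm : m ≠ 0) (a : ι → ℤ) :
    Nat.card (LinearMap.ker (congruenceForm m a))
      = Int.gcd (univ.gcd a) m * m.natAbs ^ (Fintype.card ι - 1) := by
  set d := Int.gcd (univ.gcd a) m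
  have hM : 0 < m.natAbs := Int.natAbs_pos.2 hm
  have hd : d ∣ m.natAbs := Nat.gcd_dvd_right _ _
  have hquot : 0 < m.natAbs / d := Nat.div_pos (Nat.le_of_dvd hM hd) (Nat.pos_of_dvd_of_pos hd hM)
  have hcard := (congruenceForm m a).card_ker_mul_card_range
  obtain ⟨k, hk⟩ := Nat.exists_eq_succ_of_ne_zero (Fintype.card_ne_zero (α := ι))
  rw [card_range_congruenceForm hm, Nat.card_fun, Nat.card_zmod, Nat.card_eq_fintype_card (α := ι),
    hk, pow_succ'] at hcard
  rw [hk, Nat.succ_sub_one]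
  refine Nat.eq_of_mul_eq_mul_right hquot ?_
  rw [hcard, mul_right_comm, Nat.mul_div_cancel' hd]

end LinearCongruence

theorem stmt_14 (n : ℕ) (hn : 1 ≤ n) (a : Fin n → ℤ) (b m : ℤ) (hm : m ≠ 0)
    (hd : (Int.gcd (Finset.univ.gcd a) m : ℤ) ∣ b)
    (S : Set (Fin n → ZMod m.natAbs))
    (hS : S = {x | ∑ i, (a i : ZMod m.natAbs) * x i = (b : ZMod m.natAbs)})
    (A : AddSubgroup (Fin n → ZMod m.natAbs))
    (hA : A = AddSubgroup.closure
        (Set.range fun i : Fin n =>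
          (Pi.single i ((m / Int.gcd (a i) m : ℤ) : ZMod m.natAbs) : Fin n → ZMod m.natAbs))) :
    ((QuotientAddGroup.mk (s := A)) '' S).ncard
        = (Int.gcd (Finset.univ.gcd a) m * m.natAbs ^ (n - 1)) / ∏ i, Int.gcd (a i) m ∧
    ∀ X ∈ S, ((fun v => X + v) '' (A : Set (Fin n → ZMod m.natAbs))).ncard
        = ∏ i, Int.gcd (a i) m := by
  have : Nonempty (Fin n) := ⟨⟨0, hn⟩⟩
  set f := congruenceForm m a
  have hSf : S = f ⁻¹' {(b : ZMod m.natAbs)} := hS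
  have hA_card : Nat.card A = ∏ i, Int.gcd (a i) m := by
    rw [hA, AddSubgroup.closure_range_single_eq_pi, AddSubgroup.card_pi_univ]
    simp only [Nat.card_zmultiples, ZMod.addOrderOf_intCast_ediv hm (Int.gcd_dvd_right _ _),
      Int.natAbs_natCast]
  have hA_le_ker : A ≤ f.toAddMonoidHom.ker := by
    rw [hA, AddSubgroup.closure_le]
    rintro _ ⟨i, rfl⟩
    exact congruenceForm_single_ediv_gcd a i
  have hS_card_mul : Nat.card S = Nat.card A * (QuotientAddGroup.mk '' S : Set (_ ⧸ A)).ncard := by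
    rw [← Nat.card_coe_set_eq, ← QuotientAddGroup.card_preimage_mk, hSf]
    exact congrArg (fun s : Set _ => Nat.card s)
      (f.toAddMonoidHom.preimage_image_mk_preimage hA_le_ker _).symm
  have hS_card : Nat.card S = Int.gcd (univ.gcd a) m * m.natAbs ^ (n - 1) := by
    rw [hSf, f.card_fiber_eq_card_ker (intCast_mem_range_congruenceForm a hd),
      card_ker_congruenceForm hm, Fintype.card_fin]
  refine ⟨?_, fun X _ => ?_⟩
  · rw [← hS_card, hS_card_mul, hA_card, Nat.mul_div_cancel_left _
      (prod_pos fun i _ => Int.gcd_pos_of_ne_zero_right _ hm)]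
  · rw [Set.ncard_image_of_injective _ (add_right_injective X), ← Nat.card_coe_set_eq, ← hA_card]
    rfl
end
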